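/- (Corollary 1) Let x* ≥ 0, set x̃ᵢ = min{xᵢ, x*} and E^d = Σᵢ p̄ᵢ·min{xᵢ, x*}. Define the closed infeasible regions G_{p̄,x} = {(p,E) ∈ [0,∞)² : E ≥ Ω_{p̄,x}(p)} and G_{p̄,x̃} = {(p,E) ∈ [0,∞)² : E ≥ Ω_{p̄,x̃}(p)}. Then G_{p̄,x̃} = Conv(G_{p̄,x} ∪ {(0, E^d)}), where Conv denotes the convex hull in ℝ². -/

import Mathlib

/-!
Let `P = R_{p̄,x}(x*)` be the power of the devices that outlast `x*`. Truncation cuts the signal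
off at `x*`, and since the signal is non-increasing the truncated capacity curve agrees with
`Ω_{p̄,x}` for `p ≥ P`, while on `[0, P]` it is affine, running from `(0, E^d)` to
`(P, Ω_{p̄,x}(P))`. Hence every point of `G_{p̄,x̃}` with `p < P` is a convex combination of a
point above `(0, E^d)` and a point of `G_{p̄,x}` above `(P, Ω_{p̄,x}(P))`. Conversely
`Ω_{p̄,x̃} ≤ Ω_{p̄,x}` and `Ω_{p̄,x̃}(0) = E^d`, and `G_{p̄,x̃}` is convex because any
E-p transform is convex in `p`.
-/

open MeasureTheory Set Finset

/-- The E-p transform of a signal `P`: the energy required above power rating `p`. -/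
noncomputable def EpTransform (P : ℝ → ℝ) (p : ℝ) : ℝ :=
  ∫ t in Set.Ioi (0:ℝ), max (P t - p) 0

/-- The worst-case reference signal `R_{p̄,x}(t) = Σᵢ p̄ᵢ·𝟙[0 ≤ t < xᵢ]`. -/
noncomputable def worstCase {n : ℕ} (pbar x : Fin n → ℝ) (t : ℝ) : ℝ :=
  ∑ i, if 0 ≤ t ∧ t < x i then pbar i else 0

/-- The discharging capacity curve `Ω_{p̄,x}`. -/
noncomputable def capacity {n : ℕ} (pbar x : Fin n → ℝ) (p : ℝ) : ℝ :=
  EpTransform (worstCase pbar x) p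

/-- The closed infeasible region `G_{p̄,x} = {(p,E) ∈ [0,∞)² : E ≥ Ω_{p̄,x}(p)}`. -/
noncomputable def infeasibleRegion {n : ℕ} (pbar x : Fin n → ℝ) : Set (ℝ × ℝ) :=
  {q : ℝ × ℝ | 0 ≤ q.1 ∧ 0 ≤ q.2 ∧ capacity pbar x q.1 ≤ q.2}

lemma integrableOn_Ioi_indicator_Iio_const (s c : ℝ) :
    IntegrableOn ((Iio s).indicator fun _ => c) (Ioi 0) := by
  rw [IntegrableOn, integrable_indicator_iff measurableSet_Iio, IntegrableOn,
    Measure.restrict_restrict measurableSet_Iio, Iio_inter_Ioi]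
  exact integrableOn_const measure_Ioo_lt_top.ne

lemma setIntegral_Ioi_indicator_Iio_const {s : ℝ} (hs : 0 ≤ s) (c : ℝ) :
    ∫ t in Ioi 0, (Iio s).indicator (fun _ => c) t = c * s := by
  rw [integral_indicator_const _ measurableSet_Iio, measureReal_restrict_apply measurableSet_Iio,
    Iio_inter_Ioi, Real.volume_real_Ioo_of_le hs, sub_zero, smul_eq_mul, mul_comm]

section EpTransform

variable {R : ℝ → ℝ}

lemma EpTransform_nonneg (p : ℝ) : 0 ≤ EpTransform R p :=
  integral_nonneg fun _ => le_max_right _ _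

lemma integrableOn_max_sub_const (hR : IntegrableOn R (Ioi 0)) {p : ℝ} (hp : 0 ≤ p) :
    IntegrableOn (fun t => max (R t - p) 0) (Ioi 0) :=
  hR.pos_part.mono' ((hR.1.sub aestronglyMeasurable_const).sup aestronglyMeasurable_const)
    (.of_forall fun t => by
      rw [Real.norm_of_nonneg (le_max_right _ _)]
      exact max_le_max (by linarith) le_rfl)

lemma convexOn_EpTransform (hR : IntegrableOn R (Ioi 0)) :
    ConvexOn ℝ (Ici 0) (EpTransform R) := by
  refine ⟨convex_Ici 0, fun p hp q hq a b ha hb hab => ?_⟩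
  have hRp := integrableOn_max_sub_const hR hp
  have hRq := integrableOn_max_sub_const hR hq
  simp only [smul_eq_mul, EpTransform]
  rw [← integral_const_mul, ← integral_const_mul,
    ← integral_add (hRp.const_mul a) (hRq.const_mul b)]
  have hpq : 0 ≤ a * p + b * q := add_nonneg (mul_nonneg ha hp) (mul_nonneg hb hq)
  refine integral_mono (integrableOn_max_sub_const hR hpq)
    ((hRp.const_mul a).add (hRq.const_mul b)) fun t => max_le ?_ (by positivity)
  have hp' := mul_le_mul_of_nonneg_left (le_max_left (R t - p) 0) ha
  have hq' := mul_le_mul_of_nonneg_left (le_max_left (R t - q) 0) hb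
  have hR' : R t = a * R t + b * R t := by rw [← add_mul, hab, one_mul]
  linarith

lemma EpTransform_mono {S : ℝ → ℝ} (hS : IntegrableOn S (Ioi 0)) (hRS : R ≤ S) {p : ℝ}
    (hp : 0 ≤ p) : EpTransform R p ≤ EpTransform S p :=
  integral_mono_of_nonneg (.of_forall fun _ => le_max_right _ _) (integrableOn_max_sub_const hS hp)
    (.of_forall fun t => max_le_max (sub_le_sub_right (hRS t) p) le_rfl)

variable {s : ℝ}

lemma EpTransform_indicator_Iio_of_le (hR : AntitoneOn R (Ici 0)) (hs : 0 ≤ s) {p : ℝ}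
    (hp : 0 ≤ p) (hsp : R s ≤ p) : EpTransform ((Iio s).indicator R) p = EpTransform R p := by
  refine setIntegral_congr_fun measurableSet_Ioi fun t ht => ?_
  by_cases hts : t ∈ Iio s
  · rw [indicator_of_mem hts]
  · have : R t ≤ R s := hR hs (Ioi_subset_Ici_self ht) (not_lt.1 hts)
    rw [indicator_of_notMem hts, max_eq_right (by linarith), max_eq_right (by linarith)]

lemma EpTransform_indicator_Iio_of_le_of_le (hR : AntitoneOn R (Ici 0))
    (hRi : IntegrableOn R (Ioi 0)) (hs : 0 ≤ s) {p : ℝ} (hp : 0 ≤ p) (hps : p ≤ R s) :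
    EpTransform ((Iio s).indicator R) p = EpTransform R (R s) + (R s - p) * s := by
  have hsplit : EqOn (fun t => max ((Iio s).indicator R t - p) 0)
      (fun t => max ((Iio s).indicator R t - R s) 0 + (Iio s).indicator (fun _ => R s - p) t)
      (Ioi 0) := by
    intro t ht
    by_cases hts : t ∈ Iio s
    · have : R s ≤ R t := hR (Ioi_subset_Ici_self ht) hs (le_of_lt hts)
      simp only [indicator_of_mem hts]
      rw [max_eq_left (by linarith), max_eq_left (by linarith)]
      ring
    · simp only [indicator_of_notMem hts]
      rw [max_eq_right (by linarith), max_eq_right (by linarith), zero_add]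
  rw [← EpTransform_indicator_Iio_of_le hR hs (hp.trans hps) le_rfl, EpTransform,
    setIntegral_congr_fun measurableSet_Ioi hsplit,
    integral_add (integrableOn_max_sub_const (hRi.indicator measurableSet_Iio) (hp.trans hps))
      (integrableOn_Ioi_indicator_Iio_const s _),
    setIntegral_Ioi_indicator_Iio_const hs, EpTransform]

end EpTransform

section Fleet

variable {n : ℕ} (pbar x : Fin n → ℝ)

lemma worstCase_nonneg (hp : ∀ i, 0 ≤ pbar i) (t : ℝ) : 0 ≤ worstCase pbar x t :=
  Finset.sum_nonneg fun i _ => by split_ifs <;> simp [hp i]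

lemma antitoneOn_worstCase (hp : ∀ i, 0 ≤ pbar i) : AntitoneOn (worstCase pbar x) (Ici 0) := by
  intro a ha b _ hab
  refine Finset.sum_le_sum fun i _ => ?_
  split_ifs with hb ha'
  · exact le_rfl
  · exact absurd ⟨ha, hab.trans_lt hb.2⟩ ha'
  · exact hp i
  · exact le_rfl

lemma worstCase_eq_sum_indicator {t : ℝ} (ht : 0 ≤ t) :
    worstCase pbar x t = ∑ i, (Iio (x i)).indicator (fun _ => pbar i) t :=
  Finset.sum_congr rfl fun i _ => by simp [indicator, ht]

lemma integrableOn_worstCase : IntegrableOn (worstCase pbar x) (Ioi 0) := by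
  refine IntegrableOn.congr_fun (integrable_finsetSum Finset.univ fun i _ =>
    integrableOn_Ioi_indicator_Iio_const (x i) (pbar i)) (fun t ht => ?_) measurableSet_Ioi
  exact (worstCase_eq_sum_indicator pbar x (le_of_lt ht)).symm

lemma worstCase_min (s : ℝ) :
    worstCase pbar (fun i => min (x i) s) = (Iio s).indicator (worstCase pbar x) := by
  ext t
  by_cases ht : t ∈ Iio s
  · rw [indicator_of_mem ht]
    exact Finset.sum_congr rfl fun i _ => by simp [mem_Iio.1 ht]
  · rw [indicator_of_notMem ht]
    exact Finset.sum_eq_zero fun i _ => if_neg fun h => ht (h.2.trans_le (min_le_right _ _))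

lemma capacity_zero (hp : ∀ i, 0 ≤ pbar i) (hx : ∀ i, 0 ≤ x i) :
    capacity pbar x 0 = ∑ i, pbar i * x i := by
  have hR : EqOn (fun t => max (worstCase pbar x t - 0) 0)
      (fun t => ∑ i, (Iio (x i)).indicator (fun _ => pbar i) t) (Ioi 0) := fun t ht => by
    dsimp only
    rw [sub_zero, max_eq_left (worstCase_nonneg pbar x hp t),
      worstCase_eq_sum_indicator pbar x (le_of_lt ht)]
  rw [capacity, EpTransform, setIntegral_congr_fun measurableSet_Ioi hR,
    integral_finsetSum _ fun i _ => integrableOn_Ioi_indicator_Iio_const (x i) (pbar i)]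
  exact Finset.sum_congr rfl fun i _ => setIntegral_Ioi_indicator_Iio_const (hx i) (pbar i)

lemma convex_infeasibleRegion : Convex ℝ (infeasibleRegion pbar x) := by
  have h := ((convexOn_EpTransform (integrableOn_worstCase pbar x)).convex_epigraph).inter
    (convex_halfSpace_ge (f := Prod.snd) (LinearMap.snd ℝ ℝ ℝ).isLinear 0)
  convert h using 1
  ext q
  simp only [infeasibleRegion, capacity, mem_ofPred_eq, mem_inter_iff, Set.mem_Ici]
  tauto

lemma mk_mem_infeasibleRegion {p E : ℝ} (hp : 0 ≤ p) (hE : capacity pbar x p ≤ E) :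
    (p, E) ∈ infeasibleRegion pbar x :=
  ⟨hp, (EpTransform_nonneg p).trans hE, hE⟩

variable (s : ℝ)

lemma capacity_min_le (hp : ∀ i, 0 ≤ pbar i) {p : ℝ} (hp0 : 0 ≤ p) :
    capacity pbar (fun i => min (x i) s) p ≤ capacity pbar x p := by
  refine EpTransform_mono (integrableOn_worstCase pbar x) ?_ hp0
  rw [worstCase_min]
  exact indicator_le_self' fun t _ => worstCase_nonneg pbar x hp t

lemma capacity_min_of_le (hp : ∀ i, 0 ≤ pbar i) (hs : 0 ≤ s) {p : ℝ} (hp0 : 0 ≤ p)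
    (hsp : worstCase pbar x s ≤ p) :
    capacity pbar (fun i => min (x i) s) p = capacity pbar x p := by
  rw [capacity, worstCase_min]
  exact EpTransform_indicator_Iio_of_le (antitoneOn_worstCase pbar x hp) hs hp0 hsp

lemma capacity_min_of_le_of_le (hp : ∀ i, 0 ≤ pbar i) (hs : 0 ≤ s) {p : ℝ} (hp0 : 0 ≤ p)
    (hps : p ≤ worstCase pbar x s) :
    capacity pbar (fun i => min (x i) s) p =
      capacity pbar x (worstCase pbar x s) + (worstCase pbar x s - p) * s := by
  rw [capacity, worstCase_min]
  exact EpTransform_indicator_Iio_of_le_of_le (antitoneOn_worstCase pbar x hp)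
    (integrableOn_worstCase pbar x) hs hp0 hps

end Fleet

lemma Convex.mk_mul_mem_of_le {C : Set (ℝ × ℝ)} (hC : Convex ℝ C) {q a b M : ℝ}
    (ha : ((0 : ℝ), a) ∈ C) (hM : ∀ e, M ≤ e → ((0 : ℝ), e) ∈ C) (hb : ∀ e, b ≤ e → (q, e) ∈ C)
    {θ E : ℝ} (hθ₀ : 0 ≤ θ) (hθ₁ : θ ≤ 1) (hE : (1 - θ) * a + θ * b ≤ E) :
    (θ * q, E) ∈ C := by
  set δ := E - ((1 - θ) * a + θ * b)
  have hδ : 0 ≤ δ := sub_nonneg.2 hE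
  have hlow : ((0 : ℝ), a + δ) ∈ C := by
    refine hC.segment_subset ha (hM _ (le_max_left M (a + δ))) ?_
    rw [← Prod.image_mk_segment_right, segment_eq_Icc (by simp [hδ])]
    exact mem_image_of_mem _ ⟨by linarith, le_max_right _ _⟩
  have hcomb := hC hlow (hb (b + δ) (by linarith)) (sub_nonneg.2 hθ₁) hθ₀ (by ring)
  convert hcomb using 1
  ext <;> simp only [Prod.smul_mk, Prod.mk_add_mk, smul_eq_mul] <;> ring

/-- Corollary 1: the closed infeasible region of the truncated fleet is the convex hull of
the original infeasible region together with the point `(0, E^d)`. -/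
theorem truncated_infeasible_region_eq_convexHull {n : ℕ} (pbar x : Fin n → ℝ)
    (hp : ∀ i, 0 < pbar i) (hx : ∀ i, 0 ≤ x i)
    (xs : ℝ) (hxs : 0 ≤ xs) :
    infeasibleRegion pbar (fun i => min (x i) xs) =
      convexHull ℝ (infeasibleRegion pbar x ∪ {((0 : ℝ), ∑ i, pbar i * min (x i) xs)}) := by
  have hpbar : ∀ i, 0 ≤ pbar i := fun i => (hp i).le
  set P := worstCase pbar x xs
  set Ed := ∑ i, pbar i * min (x i) xs
  have hEd : capacity pbar (fun i => min (x i) xs) 0 = Ed :=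
    capacity_zero pbar _ hpbar fun i => le_min (hx i) hxs
  refine Subset.antisymm ?_ (convexHull_min (union_subset ?_ ?_) (convex_infeasibleRegion pbar _))
  · rintro ⟨p, E⟩ ⟨hp0, -, hE⟩
    rcases le_or_gt P p with hPp | hpP
    · rw [capacity_min_of_le pbar x xs hpbar hxs hp0 hPp] at hE
      exact subset_convexHull ℝ _ (Or.inl (mk_mem_infeasibleRegion pbar x hp0 hE))
    have hP : 0 < P := hp0.trans_lt hpP
    have hEdP := capacity_min_of_le_of_le pbar x xs hpbar hxs le_rfl hP.le
    rw [capacity_min_of_le_of_le pbar x xs hpbar hxs hp0 hpP.le] at hE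
    rw [hEd, sub_zero] at hEdP
    rw [← div_mul_cancel₀ p hP.ne']
    refine (convex_convexHull ℝ _).mk_mul_mem_of_le (subset_convexHull ℝ _ (Or.inr rfl))
      (fun e he => subset_convexHull ℝ _ (Or.inl (mk_mem_infeasibleRegion pbar x le_rfl he)))
      (fun e he => subset_convexHull ℝ _ (Or.inl (mk_mem_infeasibleRegion pbar x hP.le he)))
      (div_nonneg hp0 hP.le) ((div_le_one hP).2 hpP.le) ?_
    calc (1 - p / P) * Ed + p / P * capacity pbar x P
        = capacity pbar x P + (P - p) * xs := by rw [hEdP]; field_simp; ring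
      _ ≤ E := hE
  · exact fun q hq => mk_mem_infeasibleRegion pbar _ hq.1
      ((capacity_min_le pbar x xs hpbar hq.1).trans hq.2.2)
  · rw [Set.singleton_subset_iff]
    exact mk_mem_infeasibleRegion pbar _ le_rfl hEd.le
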